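/- For integers 2 ≤ n_s < ... < n_2 < n_1, the mixed hypergraph H*_{n_1,...,n_s} of Construction I, which has 2n_1 - n_s vertices, is a one-realization of S = {n_1, ..., n_s}: its strict colorings are exactly the s coordinate-projection colorings c_1^{s*}, ..., c_s^{s*}, where c_i^{s*} uses exactly n_i colors. -/

import Mathlib

/-!
Every vertex of `X*` is either `capVertex n j = (min j n_k)_k` with `1 ≤ j ≤ n₁` or
`dropVertex n j` (coordinate `j` where `j < n_k`, and `1` elsewhere) with `n_s ≤ j < n₁`,
which gives `n₁ + (n₁ - n_s)` vertices.

In a strict colouring the D-edges separate the cap vertices below `n_s` from all larger ones and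
the cap vertices from the drop vertices, while the C-edge `{cap a, drop a, w}` forces `w` into the
class of `cap a` or of `drop a` as soon as these two are split. Hence a split at `a` propagates
upwards, and downwards across every value that is not one of the `n_i`, so the split indices are
exactly the `j ≥ n_i` for a single `i`. Every vertex `x` then has the colour of `cap (x i)`, and
the `cap t` with `t ≤ n_i` are pairwise separated: the colouring is the projection to
coordinate `i`, with `n_i` colours.
-/
/-- A mixed hypergraph on vertex type `V`: families of C-edges and D-edges. -/
structure MixedHypergraph (V : Type*) where
  Cedges : Set (Set V)
  Dedges : Set (Set V)

/-- A strict `k`-coloring: a surjective coloring with `k` colors such that every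
C-edge has two distinct vertices with a common color and every D-edge has two
distinct vertices with distinct colors. -/
def IsStrictColoring {V : Type*} (H : MixedHypergraph V) (k : ℕ) (f : V → Fin k) : Prop :=
  Function.Surjective f ∧
  (∀ e ∈ H.Cedges, ∃ u ∈ e, ∃ v ∈ e, u ≠ v ∧ f u = f v) ∧
  (∀ e ∈ H.Dedges, ∃ u ∈ e, ∃ v ∈ e, u ≠ v ∧ f u ≠ f v)

/-- The feasible set of a mixed hypergraph. -/
def FeasibleSet {V : Type*} (H : MixedHypergraph V) : Set ℕ :=
  {k | ∃ f : V → Fin k, IsStrictColoring H k f}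

/-- Two colorings induce the same partition of the vertex set. -/
def SamePartition {V : Type*} {k k' : ℕ} (f : V → Fin k) (g : V → Fin k') : Prop :=
  ∀ u v, f u = f v ↔ g u = g v

/-- `H` is a one-realization of `S`: its feasible set is `S` and for each `k`
the partition induced by a strict `k`-coloring is unique. -/
def IsOneRealization {V : Type*} (H : MixedHypergraph V) (S : Set ℕ) : Prop :=
  FeasibleSet H = S ∧
  ∀ (k : ℕ) (f g : V → Fin k), IsStrictColoring H k f → IsStrictColoring H k g →
    SamePartition f g

/-- Vertex set of Construction I: `X* ⊆ [n₁] × ⋯ × [n_s]` consists of the diagonal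
vertices `(i,…,i)` for `i ∈ [n_s - 1]`; for each `2 ≤ t ≤ s` and `n_t ≤ j ≤ n_{t-1}-1`
the vertices `(j,…,j,n_t,…,n_s)` and `(j,…,j,1,…,1)` (`j` repeated `t-1` times);
and `(n₁,…,n_s)`.  (Index `t` of the paper corresponds to `t.val + 1` here.) -/
def XstarGen (s : ℕ) (n : Fin s → ℕ) : Set (Fin s → ℕ) :=
  {x | (∃ last : Fin s, (last : ℕ) + 1 = s ∧ ∃ i, 1 ≤ i ∧ i + 1 ≤ n last ∧ ∀ k, x k = i) ∨
       (∃ t u : Fin s, (u : ℕ) + 1 = (t : ℕ) ∧ ∃ j, n t ≤ j ∧ j + 1 ≤ n u ∧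
         ((∀ k : Fin s, ((k : ℕ) < (t : ℕ) → x k = j) ∧ ((t : ℕ) ≤ (k : ℕ) → x k = n k)) ∨
          (∀ k : Fin s, ((k : ℕ) < (t : ℕ) → x k = j) ∧ ((t : ℕ) ≤ (k : ℕ) → x k = 1)))) ∨
       (∀ k, x k = n k)}

/-- The Construction-I mixed hypergraph on a vertex set `X` of `s`-tuples:
D-edges are pairs of vertices differing in every coordinate, and C-edges are
triples of distinct vertices such that every coordinate takes exactly two
distinct values among the three. -/
def HstarOn {s : ℕ} (X : Set (Fin s → ℕ)) : MixedHypergraph X where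
  Cedges := {e | ∃ u v w : X, u ≠ v ∧ u ≠ w ∧ v ≠ w ∧ e = {u, v, w} ∧
    ∀ k : Fin s, ({(u : Fin s → ℕ) k, (v : Fin s → ℕ) k, (w : Fin s → ℕ) k} : Finset ℕ).card = 2}
  Dedges := {e | ∃ u v : X, e = {u, v} ∧ ∀ k : Fin s, (u : Fin s → ℕ) k ≠ (v : Fin s → ℕ) k}

open Set

theorem Finset.card_triple_eq_two {α : Type*} [DecidableEq α] {a b c : α}
    (h : (a = b ∧ a ≠ c) ∨ (a ≠ b ∧ (c = a ∨ c = b))) : ({a, b, c} : Finset α).card = 2 := by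
  rcases h with ⟨rfl, h⟩ | ⟨h, rfl | rfl⟩ <;> simp [h, Ne.symm h]

theorem Finset.eq_or_eq_or_eq_of_card_triple_eq_two {α : Type*} [DecidableEq α] {a b c : α}
    (h : ({a, b, c} : Finset α).card = 2) : a = b ∨ a = c ∨ b = c := by
  by_contra! hne
  have : ({a, b, c} : Finset α).card = 3 :=
    Finset.card_eq_three.2 ⟨a, b, c, hne.1, hne.2.1, hne.2.2, rfl⟩
  omega

theorem SamePartition.symm {V : Type*} {k k' : ℕ} {f : V → Fin k} {g : V → Fin k'}
    (h : SamePartition f g) : SamePartition g f :=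
  fun u v => (h u v).symm

theorem SamePartition.le_of_surjective {V : Type*} {k k' : ℕ} {f : V → Fin k} {g : V → Fin k'}
    (h : SamePartition f g) (hf : Function.Surjective f) : k ≤ k' := by
  simpa using Fintype.card_le_of_injective (g ∘ Function.surjInv hf) fun a b hab => by
    simpa only [Function.surjInv_eq hf] using (h _ _).2 hab

theorem SamePartition.eq_of_surjective {V : Type*} {k k' : ℕ} {f : V → Fin k} {g : V → Fin k'}
    (h : SamePartition f g) (hf : Function.Surjective f) (hg : Function.Surjective g) : k = k' :=
  (h.le_of_surjective hf).antisymm (h.symm.le_of_surjective hg)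

section Coloring

variable {s : ℕ} {X : Set (Fin s → ℕ)} {k : ℕ}

theorem isStrictColoring_of_coord {f : X → Fin k} (i : Fin s) (hf : Function.Surjective f)
    (hfi : ∀ u v : X, f u = f v ↔ (u : Fin s → ℕ) i = (v : Fin s → ℕ) i) :
    IsStrictColoring (HstarOn X) k f := by
  refine ⟨hf, ?_, ?_⟩
  · rintro _ ⟨u, v, w, huv, huw, hvw, rfl, hcard⟩
    rcases Finset.eq_or_eq_or_eq_of_card_triple_eq_two (hcard i) with h | h | h
    · exact ⟨u, by simp, v, by simp, huv, (hfi u v).2 h⟩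
    · exact ⟨u, by simp, w, by simp, huw, (hfi u w).2 h⟩
    · exact ⟨v, by simp, w, by simp, hvw, (hfi v w).2 h⟩
  · rintro _ ⟨u, v, rfl, huv⟩
    exact ⟨u, by simp, v, by simp, fun h => huv i (by rw [h]), fun h => huv i ((hfi u v).1 h)⟩

/-- Colour relation on the ambient type: it compares the colours of tuples such as
`capVertex n j` without carrying their membership proofs around. -/
def SameColor {V α : Type*} {Y : Set V} (f : Y → α) (x y : V) : Prop :=
  ∃ (hx : x ∈ Y) (hy : y ∈ Y), f ⟨x, hx⟩ = f ⟨y, hy⟩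

section SameColor

variable {V α : Type*} {Y : Set V} {f : Y → α} {x y z : V}

theorem sameColor_iff {u v : Y} : SameColor f u v ↔ f u = f v :=
  ⟨fun ⟨_, _, h⟩ => h, fun h => ⟨u.2, v.2, h⟩⟩

theorem sameColor_self (hx : x ∈ Y) : SameColor f x x :=
  ⟨hx, hx, rfl⟩

theorem SameColor.symm (h : SameColor f x y) : SameColor f y x :=
  let ⟨hx, hy, h⟩ := h; ⟨hy, hx, h.symm⟩

theorem SameColor.trans (h : SameColor f x y) (h' : SameColor f y z) : SameColor f x z :=
  let ⟨hx, _, h⟩ := h; let ⟨_, hz, h'⟩ := h'; ⟨hx, hz, h.trans h'⟩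

end SameColor

theorem IsStrictColoring.not_sameColor {f : X → Fin k} (hf : IsStrictColoring (HstarOn X) k f)
    {x y : Fin s → ℕ} (hxy : ∀ i, x i ≠ y i) : ¬ SameColor f x y := by
  rintro ⟨hx, hy, h⟩
  obtain ⟨p, hp, q, hq, hpq, hne⟩ := hf.2.2 {⟨x, hx⟩, ⟨y, hy⟩} ⟨_, _, rfl, hxy⟩
  simp only [mem_insert_iff, mem_singleton_iff] at hp hq
  rcases hp with rfl | rfl <;> rcases hq with rfl | rfl <;> simp_all

theorem IsStrictColoring.sameColor_of_card_eq_two {f : X → Fin k}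
    (hf : IsStrictColoring (HstarOn X) k f) {x y z : Fin s → ℕ} (hx : x ∈ X) (hy : y ∈ X)
    (hz : z ∈ X) (hxy : x ≠ y) (hxz : x ≠ z) (hyz : y ≠ z)
    (hcard : ∀ i, ({x i, y i, z i} : Finset ℕ).card = 2) :
    SameColor f x y ∨ SameColor f x z ∨ SameColor f y z := by
  obtain ⟨p, hp, q, hq, hpq, he⟩ := hf.2.1 {⟨x, hx⟩, ⟨y, hy⟩, ⟨z, hz⟩}
    ⟨_, _, _, by simpa using hxy, by simpa using hxz, by simpa using hyz, rfl, hcard⟩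
  simp only [mem_insert_iff, mem_singleton_iff] at hp hq
  rcases hp with rfl | rfl | rfl <;> rcases hq with rfl | rfl | rfl <;> simp_all [SameColor]

end Coloring

section StarHypergraph

variable {s : ℕ}

/-- With `n_t ≤ j < n_{t-1}`, `capVertex n j` and `dropVertex n j` are the paper's
`(j,…,j,n_t,…,n_s)` and `(j,…,j,1,…,1)`; the diagonal vertices are the `capVertex n j` with
`j < n_s`, and `(n₁,…,n_s) = capVertex n n₁`. -/
def capVertex (n : Fin s → ℕ) (j : ℕ) : Fin s → ℕ := fun k => if j < n k then j else n k

def dropVertex (n : Fin s → ℕ) (j : ℕ) : Fin s → ℕ := fun k => if j < n k then j else 1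

def starVertices (n : Fin s → ℕ) (L N : ℕ) : Set (Fin s → ℕ) :=
  capVertex n '' Icc 1 N ∪ dropVertex n '' Ico L N

section XstarGen

variable {n : Fin s → ℕ} {L N : ℕ}

theorem StrictAnti.lt_iff_of_bracket (hanti : StrictAnti n) {t u : Fin s}
    (hut : (u : ℕ) + 1 = t) {j : ℕ} (ht : n t ≤ j) (hu : j < n u) (k : Fin s) :
    (k : ℕ) < t ↔ j < n k := by
  constructor
  · intro hk
    exact hu.trans_le (hanti.antitone (Fin.le_def.2 (by omega)))
  · intro hk
    by_contra htk
    exact absurd ((hanti.antitone (Fin.le_def.2 (by omega))).trans ht) (not_le.2 hk)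

theorem StrictAnti.exists_bracket (hanti : StrictAnti n) (hL : IsLeast (range n) L)
    (hN : IsGreatest (range n) N) {j : ℕ} (hLj : L ≤ j) (hjN : j < N) :
    ∃ t u : Fin s, (u : ℕ) + 1 = t ∧ n t ≤ j ∧ j < n u := by
  classical
  obtain ⟨kL, hkL⟩ := hL.1
  obtain ⟨kN, hkN⟩ := hN.1
  have hex : ∃ v, ∃ h : v < s, n ⟨v, h⟩ ≤ j := ⟨kL, kL.2, hkL ▸ hLj⟩
  obtain ⟨hts, htj⟩ := Nat.find_spec hex
  have ht0 : 0 < Nat.find hex := by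
    by_contra h0
    have : n kN ≤ n ⟨Nat.find hex, hts⟩ :=
      hanti.antitone (Fin.le_def.2 (show Nat.find hex ≤ kN by omega))
    omega
  have hu : ¬ ∃ h : Nat.find hex - 1 < s, n ⟨Nat.find hex - 1, h⟩ ≤ j :=
    Nat.find_min hex (by omega)
  push Not at hu
  exact ⟨⟨_, hts⟩, ⟨_, by omega⟩, by simp only; omega, htj, hu (by omega)⟩

theorem forall_bracket_iff {t j : ℕ} (hb : ∀ k : Fin s, (k : ℕ) < t ↔ j < n k)
    (x y : Fin s → ℕ) :
    (∀ k : Fin s, ((k : ℕ) < t → x k = j) ∧ (t ≤ (k : ℕ) → x k = y k)) ↔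
      x = fun k => if j < n k then j else y k := by
  rw [funext_iff]
  refine forall_congr' fun k => ?_
  by_cases hk : (k : ℕ) < t
  · simp [hk, (hb k).1 hk]
  · simp [hk, le_of_not_gt hk, mt (hb k).2 hk]

theorem StrictAnti.eq_of_isLeast (hanti : StrictAnti n) (hL : IsLeast (range n) L)
    {last : Fin s} (hlast : (last : ℕ) + 1 = s) : n last = L := by
  obtain ⟨k, rfl⟩ := hL.1
  exact le_antisymm (hanti.antitone (Fin.le_def.2 (by omega))) (hL.2 ⟨last, rfl⟩)

theorem XstarGen_subset_starVertices (hanti : StrictAnti n) (hL : IsLeast (range n) L)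
    (hN : IsGreatest (range n) N) (h1 : 1 ≤ L) : XstarGen s n ⊆ starVertices n L N := by
  have hLk : ∀ k, L ≤ n k := fun k => hL.2 ⟨k, rfl⟩
  have hkN : ∀ k, n k ≤ N := fun k => hN.2 ⟨k, rfl⟩
  rintro x (⟨last, hlast, i, hi1, hi, hx⟩ | ⟨t, u, hut, j, ht, hu, hx | hx⟩ | hx)
  · rw [hanti.eq_of_isLeast hL hlast] at hi
    refine Or.inl ⟨i, ⟨hi1, by linarith [hkN last, hLk last]⟩, funext fun k => ?_⟩
    simp only [capVertex, hx k, if_pos (show i < n k by linarith [hLk k])]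
  · have hb := hanti.lt_iff_of_bracket hut ht hu
    exact Or.inl ⟨j, ⟨by linarith [hLk t], by linarith [hkN u]⟩,
      ((forall_bracket_iff hb x n).1 hx).symm⟩
  · have hb := hanti.lt_iff_of_bracket hut ht hu
    exact Or.inr ⟨j, ⟨(hLk t).trans ht, by linarith [hkN u]⟩,
      ((forall_bracket_iff hb x fun _ => 1).1 hx).symm⟩
  · obtain ⟨k, hk⟩ := hN.1
    refine Or.inl ⟨N, ⟨by linarith [hLk k], le_rfl⟩, funext fun k => ?_⟩
    simp [capVertex, hx k, hkN k]

theorem starVertices_subset_XstarGen (hanti : StrictAnti n) (hL : IsLeast (range n) L)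
    (hN : IsGreatest (range n) N) : starVertices n L N ⊆ XstarGen s n := by
  have hkN : ∀ k, n k ≤ N := fun k => hN.2 ⟨k, rfl⟩
  rintro x (⟨j, ⟨hj1, hjN⟩, rfl⟩ | ⟨j, ⟨hLj, hjN⟩, rfl⟩)
  · rcases lt_or_ge j L with hjL | hLj
    · obtain ⟨kL, -⟩ := hL.1
      have hs := kL.pos
      have hlast := hanti.eq_of_isLeast hL (last := ⟨s - 1, by omega⟩) (by simp only; omega)
      refine Or.inl ⟨⟨s - 1, by omega⟩, by simp only; omega, j, hj1, by rw [hlast]; omega,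
        fun k => ?_⟩
      exact if_pos (hjL.trans_le (hL.2 ⟨k, rfl⟩))
    rcases hjN.lt_or_eq with hjN | rfl
    · obtain ⟨t, u, hut, ht, hu⟩ := hanti.exists_bracket hL hN hLj hjN
      exact Or.inr (Or.inl ⟨t, u, hut, j, ht, hu, Or.inl
        ((forall_bracket_iff (hanti.lt_iff_of_bracket hut ht hu) _ n).2 rfl)⟩)
    · exact Or.inr (Or.inr fun k => if_neg (not_lt.2 (hkN k)))
  · obtain ⟨t, u, hut, ht, hu⟩ := hanti.exists_bracket hL hN hLj hjN
    exact Or.inr (Or.inl ⟨t, u, hut, j, ht, hu, Or.inr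
      ((forall_bracket_iff (hanti.lt_iff_of_bracket hut ht hu) _ fun _ => 1).2 rfl)⟩)

theorem XstarGen_eq_starVertices (hanti : StrictAnti n) (hL : IsLeast (range n) L)
    (hN : IsGreatest (range n) N) (h1 : 1 ≤ L) : XstarGen s n = starVertices n L N :=
  (XstarGen_subset_starVertices hanti hL hN h1).antisymm
    (starVertices_subset_XstarGen hanti hL hN)

end XstarGen

section Vertices

variable {n : Fin s → ℕ} {L N : ℕ}

theorem capVertex_mem {j : ℕ} (hj : 1 ≤ j) (hjN : j ≤ N) :
    capVertex n j ∈ starVertices n L N :=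
  Or.inl ⟨j, ⟨hj, hjN⟩, rfl⟩

theorem dropVertex_mem {j : ℕ} (hj : L ≤ j) (hjN : j < N) :
    dropVertex n j ∈ starVertices n L N :=
  Or.inr ⟨j, ⟨hj, hjN⟩, rfl⟩

theorem coord_mem_Icc (hL : IsLeast (range n) L) (h1 : 1 ≤ L) {x : Fin s → ℕ}
    (hx : x ∈ starVertices n L N) (i : Fin s) : x i ∈ Icc 1 (n i) := by
  have := hL.2 ⟨i, rfl⟩
  rcases hx with ⟨j, ⟨hj, -⟩, rfl⟩ | ⟨j, ⟨hj, -⟩, rfl⟩ <;>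
    simp only [capVertex, dropVertex, mem_Icc] <;> split_ifs <;> omega

theorem capVertex_injOn (hN : IsGreatest (range n) N) : InjOn (capVertex n) (Iic N) := by
  obtain ⟨k, hk⟩ := hN.1
  intro j hj j' hj' h
  have := congrFun h k
  simp only [capVertex, hk, mem_Iic] at this hj hj'
  split_ifs at this <;> omega

theorem dropVertex_injOn (hN : IsGreatest (range n) N) : InjOn (dropVertex n) (Iio N) := by
  obtain ⟨k, hk⟩ := hN.1
  intro j hj j' hj' h
  have := congrFun h k
  simp only [dropVertex, hk, mem_Iio] at this hj hj'
  simpa [hj, hj'] using this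

theorem capVertex_ne_dropVertex (hL : IsLeast (range n) L) (hN : IsGreatest (range n) N)
    (h2 : 2 ≤ L) {j j' : ℕ} (hj' : L ≤ j') (hj'N : j' < N) :
    capVertex n j ≠ dropVertex n j' := by
  obtain ⟨kL, hkL⟩ := hL.1
  obtain ⟨kN, hkN⟩ := hN.1
  intro h
  have hL' := congrFun h kL
  have hN' := congrFun h kN
  simp only [capVertex, dropVertex, hkL, hkN] at hL' hN'
  split_ifs at hL' hN' <;> omega

theorem ncard_starVertices (hL : IsLeast (range n) L) (hN : IsGreatest (range n) N)
    (h2 : 2 ≤ L) : (starVertices n L N).ncard = 2 * N - L := by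
  have hLN : L ≤ N := hN.2 hL.1
  have hdisj : Disjoint (capVertex n '' Icc 1 N) (dropVertex n '' Ico L N) := by
    rw [disjoint_left]
    rintro _ ⟨j, -, rfl⟩ ⟨j', ⟨hj', hj'N⟩, h⟩
    exact capVertex_ne_dropVertex hL hN h2 hj' hj'N h.symm
  rw [starVertices, ncard_union_eq hdisj,
    ((capVertex_injOn hN).mono Icc_subset_Iic_self).ncard_image,
    ((dropVertex_injOn hN).mono Ico_subset_Iio_self).ncard_image, ncard_Icc_nat, ncard_Ico_nat]
  omega

end Vertices

section StarColoring

variable {n : Fin s → ℕ} {L N k : ℕ} {f : starVertices n L N → Fin k}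

theorem capVertex_apply_ne_capVertex_apply (hL : IsLeast (range n) L) {j j' : ℕ} (hjL : j < L)
    (hjj' : j < j') (i : Fin s) : capVertex n j i ≠ capVertex n j' i := by
  have := hL.2 ⟨i, rfl⟩
  simp only [capVertex]
  split_ifs <;> omega

theorem capVertex_apply_ne_dropVertex_apply (hL : IsLeast (range n) L) (h2 : 2 ≤ L) {j j' : ℕ}
    (hj : 2 ≤ j) (hjj' : j ≠ j') (i : Fin s) : capVertex n j i ≠ dropVertex n j' i := by
  have := hL.2 ⟨i, rfl⟩
  simp only [capVertex, dropVertex]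
  split_ifs <;> omega

/-- `hwa` says exactly that `{capVertex n a, dropVertex n a, w}` is a C-edge. -/
theorem IsStrictColoring.sameColor_of_split
    (hf : IsStrictColoring (HstarOn (starVertices n L N)) k f)
    (hL : IsLeast (range n) L) (hN : IsGreatest (range n) N) (h2 : 2 ≤ L) {a : ℕ} (ha : L ≤ a)
    (haN : a < N) (hsplit : ¬ SameColor f (capVertex n a) (dropVertex n a))
    {w : Fin s → ℕ} (hw : w ∈ starVertices n L N)
    (hwa : ∀ i, (a < n i → w i ≠ a) ∧ (n i ≤ a → w i = n i ∨ w i = 1)) :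
    SameColor f (capVertex n a) w ∨ SameColor f (dropVertex n a) w := by
  obtain ⟨kN, hkN⟩ := hN.1
  have hwN := (hwa kN).1 (hkN ▸ haN)
  have hcard : ∀ i, ({capVertex n a i, dropVertex n a i, w i} : Finset ℕ).card = 2 := by
    intro i
    have := hL.2 ⟨i, rfl⟩
    have := hwa i
    apply Finset.card_triple_eq_two
    simp only [capVertex, dropVertex]
    split_ifs <;> omega
  rcases hf.sameColor_of_card_eq_two (capVertex_mem (by omega) haN.le) (dropVertex_mem ha haN) hw
    (capVertex_ne_dropVertex hL hN h2 ha haN)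
    (fun h => hwN (by rw [← h]; simp [capVertex, hkN, haN]))
    (fun h => hwN (by rw [← h]; simp [dropVertex, hkN, haN])) hcard with h | h | h
  · exact absurd h hsplit
  · exact Or.inl h
  · exact Or.inr h

theorem IsStrictColoring.sameColor_dropVertex_capVertex_one
    (hf : IsStrictColoring (HstarOn (starVertices n L N)) k f)
    (hL : IsLeast (range n) L) (hN : IsGreatest (range n) N) (h2 : 2 ≤ L) {a : ℕ} (ha : L ≤ a)
    (haN : a < N) (hsplit : ¬ SameColor f (capVertex n a) (dropVertex n a)) :
    SameColor f (dropVertex n a) (capVertex n 1) := by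
  rcases hf.sameColor_of_split hL hN h2 ha haN hsplit (capVertex_mem le_rfl (by omega))
    (fun i => by have := hL.2 ⟨i, rfl⟩; simp only [capVertex]; split_ifs <;> omega) with h | h
  · exact absurd h.symm (hf.not_sameColor (capVertex_apply_ne_capVertex_apply hL (by omega)
      (by omega)))
  · exact h

theorem IsStrictColoring.sameColor_capVertex_of_split
    (hf : IsStrictColoring (HstarOn (starVertices n L N)) k f)
    (hL : IsLeast (range n) L) (hN : IsGreatest (range n) N) (h2 : 2 ≤ L) {a b : ℕ}
    (ha : L ≤ a) (haN : a < N) (hsplit : ¬ SameColor f (capVertex n a) (dropVertex n a))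
    (hb : L ≤ b) (hbN : b ≤ N) (hab : a ≠ b) (hgap : ∀ i, n i ≤ a → n i ≤ b) :
    SameColor f (capVertex n a) (capVertex n b) := by
  rcases hf.sameColor_of_split hL hN h2 ha haN hsplit (capVertex_mem (by omega) hbN)
    (fun i => by have := hgap i; simp only [capVertex]; split_ifs <;> omega) with h | h
  · exact h
  · exact absurd h.symm (hf.not_sameColor (capVertex_apply_ne_dropVertex_apply hL h2 (by omega)
      hab.symm))

theorem IsStrictColoring.sameColor_dropVertex_of_split
    (hf : IsStrictColoring (HstarOn (starVertices n L N)) k f)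
    (hL : IsLeast (range n) L) (hN : IsGreatest (range n) N) (h2 : 2 ≤ L) {a b : ℕ}
    (ha : L ≤ a) (haN : a < N) (hsplit : ¬ SameColor f (capVertex n a) (dropVertex n a))
    (hb : L ≤ b) (hbN : b < N) (hab : a ≠ b) (hgap : ∀ i, n i ≤ a → n i ≤ b) :
    SameColor f (dropVertex n a) (dropVertex n b) := by
  rcases hf.sameColor_of_split hL hN h2 ha haN hsplit (dropVertex_mem hb hbN)
    (fun i => by have := hgap i; simp only [dropVertex]; split_ifs <;> omega) with h | h
  · exact absurd h (hf.not_sameColor (capVertex_apply_ne_dropVertex_apply hL h2 (by omega) hab))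
  · exact h

theorem IsStrictColoring.split_of_split
    (hf : IsStrictColoring (HstarOn (starVertices n L N)) k f)
    (hL : IsLeast (range n) L) (hN : IsGreatest (range n) N) (h2 : 2 ≤ L) {a b : ℕ}
    (ha : L ≤ a) (haN : a < N) (hsplit : ¬ SameColor f (capVertex n a) (dropVertex n a))
    (hb : L ≤ b) (hbN : b < N) (hab : a ≠ b) (hgap : ∀ i, n i ≤ a → n i ≤ b) :
    ¬ SameColor f (capVertex n b) (dropVertex n b) := fun h =>
  hsplit <| ((hf.sameColor_capVertex_of_split hL hN h2 ha haN hsplit hb hbN.le hab hgap).trans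
    h).trans (hf.sameColor_dropVertex_of_split hL hN h2 ha haN hsplit hb hbN hab hgap).symm

theorem IsStrictColoring.exists_split_threshold
    (hf : IsStrictColoring (HstarOn (starVertices n L N)) k f)
    (hL : IsLeast (range n) L) (hN : IsGreatest (range n) N) (h2 : 2 ≤ L) :
    ∃ i, ∀ j, L ≤ j → j < N →
      (¬ SameColor f (capVertex n j) (dropVertex n j) ↔ n i ≤ j) := by
  classical
  have hLN : L ≤ N := hN.2 hL.1
  have hex : ∃ m, L ≤ m ∧ (m < N → ¬ SameColor f (capVertex n m) (dropVertex n m)) :=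
    ⟨N, hLN, fun h => absurd h (lt_irrefl N)⟩
  obtain ⟨hLm, hm⟩ := Nat.find_spec hex
  have hmN : Nat.find hex ≤ N := Nat.find_min' hex ⟨hLN, fun h => absurd h (lt_irrefl N)⟩
  set m := Nat.find hex
  have key : ∀ j, L ≤ j → j < N →
      (¬ SameColor f (capVertex n j) (dropVertex n j) ↔ m ≤ j) := by
    intro j hLj hjN
    refine ⟨fun h => Nat.find_min' hex ⟨hLj, fun _ => h⟩, fun hmj => ?_⟩
    rcases hmj.lt_or_eq with hmj | rfl
    · exact hf.split_of_split hL hN h2 hLm (by omega) (hm (by omega)) hLj hjN hmj.ne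
        fun i hi => hi.trans hmj.le
    · exact hm hjN
  suffices m ∈ range n by
    obtain ⟨i, hi⟩ := this
    exact ⟨i, hi ▸ key⟩
  by_contra hnot
  have hLm' : L < m := hLm.lt_of_ne fun h => hnot (h ▸ hL.1)
  have hmN' : m < N := hmN.lt_of_ne fun h => hnot (h ▸ hN.1)
  -- with no `n i` equal to `m`, the split at `m` propagates down to `m - 1`, against minimality
  have hsplit := hf.split_of_split hL hN h2 hLm hmN' (hm hmN') (b := m - 1) (by omega) (by omega)
    (by omega) fun i hi => Nat.le_sub_one_of_lt (hi.lt_of_ne fun h => hnot ⟨i, h⟩)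
  exact Nat.find_min hex (show m - 1 < m by omega) ⟨by omega, fun _ => hsplit⟩

theorem IsStrictColoring.sameColor_capVertex_apply
    (hf : IsStrictColoring (HstarOn (starVertices n L N)) k f)
    (hL : IsLeast (range n) L) (hN : IsGreatest (range n) N) (h2 : 2 ≤ L) {i : Fin s}
    (hm : ∀ j, L ≤ j → j < N →
      (¬ SameColor f (capVertex n j) (dropVertex n j) ↔ n i ≤ j))
    {x : Fin s → ℕ} (hx : x ∈ starVertices n L N) : SameColor f x (capVertex n (x i)) := by
  have hLi := hL.2 ⟨i, rfl⟩
  rcases hx with ⟨j, ⟨hj1, hjN⟩, rfl⟩ | ⟨j, ⟨hLj, hjN⟩, rfl⟩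
  · by_cases hji : j < n i
    · rw [show capVertex n j i = j from if_pos hji]
      exact sameColor_self (capVertex_mem hj1 hjN)
    rw [show capVertex n j i = n i from if_neg hji]
    rcases (not_lt.1 hji).lt_or_eq with hij | hij
    · have hiN := hij.trans_le hjN
      exact (hf.sameColor_capVertex_of_split hL hN h2 hLi hiN ((hm _ hLi hiN).2 le_rfl)
        (by omega) hjN hij.ne fun i' hi' => hi'.trans hij.le).symm
    · rw [hij]
      exact sameColor_self (capVertex_mem hj1 hjN)
  · by_cases hji : j < n i
    · rw [show dropVertex n j i = j from if_pos hji]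
      exact (not_not.1 fun h => not_le.2 hji ((hm j hLj hjN).1 h)).symm
    · rw [show dropVertex n j i = 1 from if_neg hji]
      exact hf.sameColor_dropVertex_capVertex_one hL hN h2 hLj hjN ((hm j hLj hjN).2 (not_lt.1 hji))

theorem IsStrictColoring.not_sameColor_capVertex
    (hf : IsStrictColoring (HstarOn (starVertices n L N)) k f)
    (hL : IsLeast (range n) L) (hN : IsGreatest (range n) N) (h2 : 2 ≤ L) {i : Fin s}
    (hm : ∀ j, L ≤ j → j < N →
      (¬ SameColor f (capVertex n j) (dropVertex n j) ↔ n i ≤ j))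
    {t t' : ℕ} (htt' : t < t') (ht' : t' ≤ n i) :
    ¬ SameColor f (capVertex n t) (capVertex n t') := by
  rcases lt_or_ge t L with htL | hLt
  · exact hf.not_sameColor (capVertex_apply_ne_capVertex_apply hL htL htt')
  intro h
  have htN : t < N := by linarith [hN.2 ⟨i, rfl⟩]
  have hmerged : SameColor f (capVertex n t) (dropVertex n t) :=
    not_not.1 fun hs => absurd ((hm t hLt htN).1 hs) (by omega)
  exact hf.not_sameColor (capVertex_apply_ne_dropVertex_apply hL h2 (by omega) htt'.ne')
    (h.symm.trans hmerged)

theorem IsStrictColoring.exists_coord_iff (hf : IsStrictColoring (HstarOn (starVertices n L N)) k f)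
    (hL : IsLeast (range n) L) (hN : IsGreatest (range n) N) (h2 : 2 ≤ L) :
    ∃ i, ∀ u v : starVertices n L N,
      f u = f v ↔ (u : Fin s → ℕ) i = (v : Fin s → ℕ) i := by
  obtain ⟨i, hm⟩ := hf.exists_split_threshold hL hN h2
  refine ⟨i, fun u v => ?_⟩
  have hu := hf.sameColor_capVertex_apply hL hN h2 hm u.2
  have hv := hf.sameColor_capVertex_apply hL hN h2 hm v.2
  rw [← sameColor_iff]
  refine ⟨fun h => ?_, fun h => hu.trans (by rw [h]; exact hv.symm)⟩
  have huv := hu.symm.trans (h.trans hv)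
  have hui := coord_mem_Icc hL (by omega) u.2 i
  have hvi := coord_mem_Icc hL (by omega) v.2 i
  by_contra hne
  rcases lt_or_gt_of_ne hne with hlt | hlt
  · exact hf.not_sameColor_capVertex hL hN h2 hm hlt hvi.2 huv
  · exact hf.not_sameColor_capVertex hL hN h2 hm hlt hui.2 huv.symm

theorem exists_isStrictColoring_coord (hL : IsLeast (range n) L) (hN : IsGreatest (range n) N)
    (h1 : 1 ≤ L) (i : Fin s) :
    ∃ g : starVertices n L N → Fin (n i),
      IsStrictColoring (HstarOn (starVertices n L N)) (n i) g ∧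
        ∀ u v : starVertices n L N,
          g u = g v ↔ (u : Fin s → ℕ) i = (v : Fin s → ℕ) i := by
  have hc := fun u : starVertices n L N => coord_mem_Icc hL h1 u.2 i
  let g : starVertices n L N → Fin (n i) := fun u =>
    ⟨(u : Fin s → ℕ) i - 1, by have := hc u; simp only [mem_Icc] at this; omega⟩
  have hgi : ∀ u v, g u = g v ↔ (u : Fin s → ℕ) i = (v : Fin s → ℕ) i := fun u v => by
    have := hc u; have := hc v; simp only [g, Fin.mk.injEq, mem_Icc] at *; omega
  have hsurj : Function.Surjective g := fun t =>
    ⟨⟨capVertex n (t + 1), capVertex_mem (by omega) (by linarith [t.2, hN.2 ⟨i, rfl⟩])⟩,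
      Fin.ext (by have := t.2; simp only [g, capVertex]; split_ifs <;> omega)⟩
  exact ⟨g, isStrictColoring_of_coord i hsurj hgi, hgi⟩

theorem IsStrictColoring.exists_eq_coord (hf : IsStrictColoring (HstarOn (starVertices n L N)) k f)
    (hL : IsLeast (range n) L) (hN : IsGreatest (range n) N) (h2 : 2 ≤ L) :
    ∃ i, k = n i ∧ ∀ u v : starVertices n L N,
      f u = f v ↔ (u : Fin s → ℕ) i = (v : Fin s → ℕ) i := by
  obtain ⟨i, hfi⟩ := hf.exists_coord_iff hL hN h2
  obtain ⟨g, hg, hgi⟩ := exists_isStrictColoring_coord hL hN (by omega) i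
  exact ⟨i, SamePartition.eq_of_surjective (fun u v => (hfi u v).trans (hgi u v).symm) hf.1 hg.1,
    hfi⟩

end StarColoring

end StarHypergraph

/-- for `2 ≤ n_s < ⋯ < n₁`, the hypergraph `H*_{n₁,…,n_s}` of
Construction I has `2n₁ - n_s` vertices, is a one-realization of
`S = {n₁,…,n_s}`, and its strict colorings are exactly the `s`
coordinate-projection colorings, the `i`-th using exactly `n_i` colors. -/
theorem HstarGen_one_realization (s : ℕ) (hs : 0 < s) (n : Fin s → ℕ)
    (hanti : StrictAnti n) (h2 : 2 ≤ n ⟨s - 1, by omega⟩) :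
    (XstarGen s n).ncard = 2 * n ⟨0, hs⟩ - n ⟨s - 1, by omega⟩ ∧
    IsOneRealization (HstarOn (XstarGen s n)) (Set.range n) ∧
    ∀ (k : ℕ) (f : XstarGen s n → Fin k),
      IsStrictColoring (HstarOn (XstarGen s n)) k f →
      ∃ i : Fin s, k = n i ∧
        ∀ u v : XstarGen s n, f u = f v ↔ (u : Fin s → ℕ) i = (v : Fin s → ℕ) i := by
  have hL : IsLeast (range n) (n ⟨s - 1, by omega⟩) :=
    ⟨mem_range_self _,
      forall_mem_range.2 fun k => hanti.antitone (Fin.le_def.2 (by simp only; omega))⟩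
  have hN : IsGreatest (range n) (n ⟨0, hs⟩) :=
    ⟨mem_range_self _, forall_mem_range.2 fun k => hanti.antitone (Fin.le_def.2 (by simp))⟩
  rw [XstarGen_eq_starVertices hanti hL hN (by omega)]
  have classify := fun k f (hf : IsStrictColoring _ k f) => hf.exists_eq_coord hL hN h2
  refine ⟨ncard_starVertices hL hN h2, ⟨?_, fun k f g hf hg u v => ?_⟩, classify⟩
  · ext k
    refine ⟨fun ⟨f, hf⟩ => ?_, ?_⟩
    · obtain ⟨i, rfl, -⟩ := classify k f hf
      exact mem_range_self i
    · rintro ⟨i, rfl⟩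
      obtain ⟨g, hg, -⟩ := exists_isStrictColoring_coord hL hN (by omega) i
      exact ⟨g, hg⟩
  · obtain ⟨i, hi, hfi⟩ := classify k f hf
    obtain ⟨i', hi', hgi⟩ := classify k g hg
    obtain rfl : i = i' := hanti.injective (hi.symm.trans hi')
    rw [hfi, hgi]
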